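/- arXiv:2406.16399 — 2 statements merged into one kernel-verified Lean document; each statement's English description precedes it below -/
import Mathlib

section
/- For a permutation π of size n, PSB(Bubblesort(π)) = id_n if and only if π avoids all six patterns 2341, 2431, 3241, 4231, 45213, and 54213. -/
/-- `π` is a permutation of `{1,…,n}`, encoded as the list of its values. -/
def IsPermList (n : ℕ) (π : List ℕ) : Prop := π.Perm (List.range' 1 n)

/-- The pattern `σ` occurs in `π`: some subsequence of `π` is order-isomorphic to `σ`. -/
def Contains (π σ : List ℕ) : Prop :=
  ∃ τ : List ℕ, τ.Sublist π ∧ τ.length = σ.length ∧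
    ∀ i j : ℕ, i < τ.length → j < τ.length → (τ[i]! < τ[j]! ↔ σ[i]! < σ[j]!)

/-- `π` avoids the pattern `σ`. -/
def Avoids (π σ : List ℕ) : Prop := ¬ Contains π σ

/-- The pop stack with bypass sorting procedure (algorithm PSB); the second
argument is the pop stack, stored top-first.  Push if the stack is empty or the
current element is `TOP - 1`; bypass if it is `< TOP - 1`; otherwise pop the
whole stack and push.  At the end the stack is popped. -/
def psbAux : List ℕ → List ℕ → List ℕ
  | [], s => s
  | x :: xs, [] => psbAux xs [x]
  | x :: xs, t :: s =>
      if x + 1 = t then psbAux xs (x :: t :: s)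
      else if x + 1 < t then x :: psbAux xs (t :: s)
      else (t :: s) ++ psbAux xs [x]

/-- The map associated with the PSB algorithm. -/
def psb (π : List ℕ) : List ℕ := psbAux π []

/-- The (optimal) Queuesort procedure, using a queue with a bypass; the second
argument is the queue, front-first. -/
def queuesortAux : List ℕ → List ℕ → List ℕ
  | [], q => q
  | x :: xs, q =>
      match q.getLast? with
      | none => queuesortAux xs [x]
      | some b =>
          if b < x then queuesortAux xs (q ++ [x])
          else q.takeWhile (fun a => decide (a < x)) ++
            x :: queuesortAux xs (q.dropWhile (fun a => decide (a < x)))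

/-- The map associated with Queuesort. -/
def queuesort (π : List ℕ) : List ℕ := queuesortAux π []

/-- One pass of Bubblesort: traverse left to right, swapping adjacent
out-of-order entries. -/
def bubblesort : List ℕ → List ℕ
  | [] => []
  | [x] => [x]
  | x :: y :: xs => if x ≤ y then x :: bubblesort (y :: xs) else y :: bubblesort (x :: xs)

section Machinery
open List

/-! ### Basic sublist machinery -/

lemma sub2_ne {l : List ℕ} {u v : ℕ} (hn : l.Nodup) (h : [u, v].Sublist l) : u ≠ v := by
  rintro rfl
  have hc := h.count_le u
  simp [List.count_cons] at hc
  have := List.nodup_iff_count_le_one.mp hn u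
  omega

lemma sub2_asymm {l : List ℕ} {u v : ℕ} (hn : l.Nodup) (h : [u, v].Sublist l)
    (h' : [v, u].Sublist l) : False := by
  induction l with
  | nil => simp at h
  | cons x t ih =>
    have hne : u ≠ v := sub2_ne hn h
    rcases List.cons_sublist_cons'.mp h with h1 | ⟨rfl, h1⟩
    · rcases List.cons_sublist_cons'.mp h' with h2 | ⟨rfl, h2⟩
      · exact ih (List.nodup_cons.mp hn).2 h1 h2
      · have : v ∈ t := (List.singleton_sublist.mp (by
          have hv : [v] <+ [u,v] := by
            refine List.Sublist.cons _ (List.Sublist.refl _)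
          exact hv.trans h1))
        exact (List.nodup_cons.mp hn).1 this
    · rcases List.cons_sublist_cons'.mp h' with h2 | ⟨h3, h2⟩
      · have : u ∈ t := List.singleton_sublist.mp (by
          have : [u] <+ [v,u] := by
            refine List.Sublist.cons _ ?_
            exact List.Sublist.refl _
          exact this.trans h2)
        exact (List.nodup_cons.mp hn).1 this
      · exact hne h3.symm

lemma sub2_total {l : List ℕ} {u v : ℕ} (hu : u ∈ l) (hv : v ∈ l) :
    u = v ∨ [u, v].Sublist l ∨ [v, u].Sublist l := by
  induction l with
  | nil => simp at hu
  | cons x t ih =>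
    rcases List.mem_cons.mp hu with rfl | hu'
    · rcases List.mem_cons.mp hv with rfl | hv'
      · exact Or.inl rfl
      · refine Or.inr (Or.inl ?_)
        exact List.cons_sublist_cons.mpr (List.singleton_sublist.mpr hv')
    · rcases List.mem_cons.mp hv with rfl | hv'
      · refine Or.inr (Or.inr ?_)
        exact List.cons_sublist_cons.mpr (List.singleton_sublist.mpr hu')
      · rcases ih hu' hv' with h | h | h
        · exact Or.inl h
        · exact Or.inr (Or.inl (h.cons x))
        · exact Or.inr (Or.inr (h.cons x))

lemma sub2_of_mem_mem {l1 l2 : List ℕ} {u v : ℕ} (hu : u ∈ l1) (hv : v ∈ l2) :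
    [u, v].Sublist (l1 ++ l2) := by
  have : [u] ++ [v] <+ l1 ++ l2 :=
    (List.singleton_sublist.mpr hu).append (List.singleton_sublist.mpr hv)
  simpa using this

lemma sub2_left {A B : List ℕ} {a b : ℕ} (hn : (A ++ b :: B).Nodup)
    (h : [a, b].Sublist (A ++ b :: B)) : a ∈ A := by
  induction A with
  | nil =>
    exfalso
    simp only [List.nil_append] at h hn
    have hbB : b ∉ B := (List.nodup_cons.mp hn).1
    rcases List.cons_sublist_cons'.mp h with h1 | ⟨rfl, h1⟩
    · exact hbB (by
        have : [b] <+ [a, b] := by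
          refine List.Sublist.cons _ (List.Sublist.refl _)
        have := this.trans h1
        exact List.singleton_sublist.mp this)
    · exact hbB (List.singleton_sublist.mp h1)
  | cons x A' ih =>
    simp only [List.cons_append] at h hn
    rcases List.cons_sublist_cons'.mp h with h1 | ⟨rfl, h1⟩
    · exact List.mem_cons_of_mem _ (ih (List.nodup_cons.mp hn).2 h1)
    · exact List.mem_cons_self

lemma subchain_right {A B : List ℕ} {c d : ℕ} (hn : (A ++ B).Nodup)
    (h : [c, d].Sublist (A ++ B)) (hc : c ∈ B) : [c, d].Sublist B := by
  induction A with
  | nil => simpa using h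
  | cons x A' ih =>
    simp only [List.cons_append] at h hn
    rcases List.cons_sublist_cons'.mp h with h1 | ⟨rfl, h1⟩
    · exact ih (List.nodup_cons.mp hn).2 h1
    · exfalso
      exact (List.nodup_cons.mp hn).1 (List.mem_append.mpr (Or.inr hc))

lemma mem_right_of_sub2 {A B : List ℕ} {c d : ℕ} (hn : (A ++ B).Nodup)
    (h : [c, d].Sublist (A ++ B)) (hc : c ∈ B) : d ∈ B := by
  have := subchain_right hn h hc
  have : [d] <+ B := by
    have h2 : [d] <+ [c, d] := by
      refine List.Sublist.cons _ (List.Sublist.refl _)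
    exact h2.trans this
  exact List.singleton_sublist.mp this

lemma sub2_right {A B : List ℕ} {b c : ℕ} (hn : (A ++ b :: B).Nodup)
    (h : [b, c].Sublist (A ++ b :: B)) : c ∈ B := by
  have hb : b ∈ b :: B := List.mem_cons_self
  have h2 := subchain_right hn h hb
  rcases List.cons_sublist_cons'.mp h2 with h1 | ⟨_, h1⟩
  · exfalso
    have hbB : b ∈ B := List.singleton_sublist.mp (by
      have : [b] <+ [b, c] := by
        exact List.cons_sublist_cons.mpr (List.nil_sublist _) |>.trans
          (by refine List.Sublist.refl _)
      have h3 : b :: [c] <+ B := h1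
      have : [b] <+ b :: [c] := List.cons_sublist_cons.mpr (List.nil_sublist _)
      exact this.trans h3)
    have hnB := (List.nodup_append.mp hn).2.1
    exact (List.nodup_cons.mp hnB).1 hbB
  · exact List.singleton_sublist.mp h1

lemma assemble3 {l : List ℕ} {a b c : ℕ} (hn : l.Nodup)
    (h1 : [a, b].Sublist l) (h2 : [b, c].Sublist l) : [a, b, c].Sublist l := by
  have hb : b ∈ l := List.singleton_sublist.mp (by
    have : [b] <+ [a, b] := by refine List.Sublist.cons _ (List.Sublist.refl _)
    exact this.trans h1)
  obtain ⟨A, B, rfl⟩ := List.append_of_mem hb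
  have ha : a ∈ A := sub2_left hn h1
  have hc : c ∈ B := sub2_right hn h2
  have : [a] ++ b :: [c] <+ A ++ b :: B :=
    (List.singleton_sublist.mpr ha).append
      (List.cons_sublist_cons.mpr (List.singleton_sublist.mpr hc))
  simpa using this

lemma assemble4 {l : List ℕ} {a b c d : ℕ} (hn : l.Nodup)
    (h1 : [a, b].Sublist l) (h2 : [b, c].Sublist l) (h3 : [c, d].Sublist l) :
    [a, b, c, d].Sublist l := by
  have hb : b ∈ l := List.singleton_sublist.mp (by
    have : [b] <+ [a, b] := by refine List.Sublist.cons _ (List.Sublist.refl _)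
    exact this.trans h1)
  obtain ⟨A, B, rfl⟩ := List.append_of_mem hb
  have ha : a ∈ A := sub2_left hn h1
  have hc : c ∈ B := sub2_right hn h2
  have hcd : [c, d].Sublist (b :: B) := by
    have : [c, d].Sublist ((A ++ [b]) ++ B) := by simpa using h3
    have hn' : ((A ++ [b]) ++ B).Nodup := by simpa using hn
    have := subchain_right (A := A ++ [b]) (B := B) hn' this hc
    exact this.cons b
  have hcdB : [c, d].Sublist B := by
    rcases List.cons_sublist_cons'.mp hcd with h4 | ⟨rfl, h4⟩
    · exact h4
    · exfalso
      have hnB := (List.nodup_append.mp hn).2.1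
      exact (List.nodup_cons.mp hnB).1 hc
  have : [a] ++ b :: [c, d] <+ A ++ b :: B :=
    (List.singleton_sublist.mpr ha).append
      (List.cons_sublist_cons.mpr hcdB)
  simpa using this

lemma assemble5 {l : List ℕ} {a b c d e : ℕ} (hn : l.Nodup)
    (h1 : [a, b].Sublist l) (h2 : [b, c].Sublist l) (h3 : [c, d].Sublist l)
    (h4 : [d, e].Sublist l) : [a, b, c, d, e].Sublist l := by
  have hb : b ∈ l := List.singleton_sublist.mp (by
    have : [b] <+ [a, b] := by refine List.Sublist.cons _ (List.Sublist.refl _)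
    exact this.trans h1)
  obtain ⟨A, B, rfl⟩ := List.append_of_mem hb
  have hn' : ((A ++ [b]) ++ B).Nodup := by simpa using hn
  have ha : a ∈ A := sub2_left hn h1
  have hc : c ∈ B := sub2_right hn h2
  have hcdB : [c, d].Sublist B := by
    have : [c, d].Sublist ((A ++ [b]) ++ B) := by simpa using h3
    exact subchain_right hn' this hc
  have hd : d ∈ B := mem_right_of_sub2 hn' (by simpa using h3) hc
  have hdeB : [d, e].Sublist B := by
    have : [d, e].Sublist ((A ++ [b]) ++ B) := by simpa using h4
    exact subchain_right hn' this hd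
  have hnB : B.Nodup := ((List.nodup_append.mp hn).2.1).of_cons
  have hcde : [c, d, e].Sublist B := assemble3 hnB hcdB hdeB
  have : [a] ++ b :: [c, d, e] <+ A ++ b :: B :=
    (List.singleton_sublist.mpr ha).append (List.cons_sublist_cons.mpr hcde)
  simpa using this

lemma cons_sublist_split {a : ℕ} {t l : List ℕ} (h : (a :: t).Sublist l) :
    ∃ A B, l = A ++ a :: B ∧ t.Sublist B := by
  induction l with
  | nil => simp at h
  | cons x l' ih =>
    rcases List.cons_sublist_cons'.mp h with h1 | ⟨rfl, h1⟩
    · obtain ⟨A, B, rfl, ht⟩ := ih h1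
      exact ⟨x :: A, B, rfl, ht⟩
    · exact ⟨[], l', rfl, h1⟩

lemma sublist_pair_lt {c k u v : ℕ} (h : [u, v].Sublist (List.range' c k)) : u < v := by
  have hp := List.Pairwise.sublist h (List.pairwise_lt_range' (s := c) (n := k))
  simp only [List.pairwise_cons] at hp
  exact hp.1 v (by simp)
/-! ### psbAux and bubblesort basics -/

lemma psbAux_nil (s : List ℕ) : psbAux [] s = s := rfl

lemma psbAux_cons_nil (x : ℕ) (xs : List ℕ) : psbAux (x :: xs) [] = psbAux xs [x] := rfl

lemma psbAux_cons_cons (x : ℕ) (xs : List ℕ) (t : ℕ) (s : List ℕ) :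
    psbAux (x :: xs) (t :: s) =
      if x + 1 = t then psbAux xs (x :: t :: s)
      else if x + 1 < t then x :: psbAux xs (t :: s)
      else (t :: s) ++ psbAux xs [x] := rfl

lemma psbAux_perm (xs : List ℕ) : ∀ s, (psbAux xs s).Perm (xs ++ s) := by
  induction xs with
  | nil => intro s; simp [psbAux_nil]
  | cons x xs ih =>
    intro s
    cases s with
    | nil =>
      rw [psbAux_cons_nil]
      refine (ih [x]).trans ?_
      simpa using (List.perm_middle (a := x) (l₁ := xs) (l₂ := [])).trans (by simp)
    | cons t s =>
      rw [psbAux_cons_cons]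
      split_ifs with h1 h2
      · refine (ih (x :: t :: s)).trans ?_
        exact List.perm_middle
      · exact ((ih (t :: s)).cons x).symm.symm
      · refine (List.Perm.append_left (t :: s) (ih [x])).trans ?_
        refine (List.perm_append_comm).trans ?_
        refine List.Perm.append_right (t :: s) ?_
        simpa using (List.perm_middle (a := x) (l₁ := xs) (l₂ := [])).trans (by simp)

lemma mem_psbAux {xs s : List ℕ} {y : ℕ} (h : y ∈ xs ∨ y ∈ s) : y ∈ psbAux xs s := by
  have := (psbAux_perm xs s).mem_iff (a := y)
  rw [this]
  simpa using h

lemma bubblesort_nil : bubblesort [] = [] := by rw [bubblesort]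
lemma bubblesort_single (x : ℕ) : bubblesort [x] = [x] := by rw [bubblesort]
lemma bubblesort_cons_cons (x y : ℕ) (xs : List ℕ) :
    bubblesort (x :: y :: xs) =
      if x ≤ y then x :: bubblesort (y :: xs) else y :: bubblesort (x :: xs) := by
  rw [bubblesort]

lemma bubblesort_cons (x : ℕ) (xs : List ℕ) :
    bubblesort (x :: xs) =
      xs.takeWhile (fun y => decide (y < x)) ++ x :: bubblesort (xs.dropWhile (fun y => decide (y < x))) := by
  induction xs with
  | nil => simp [bubblesort_single, bubblesort_nil]
  | cons y ys ih =>
    rw [bubblesort_cons_cons]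
    by_cases h : x ≤ y
    · rw [if_pos h]
      have hny : ¬ (y < x) := not_lt.mpr h
      simp [List.takeWhile_cons, List.dropWhile_cons, hny]
    · rw [if_neg h]
      have hy : y < x := not_le.mp h
      have hyd : (decide (y < x)) = true := by simpa using hy
      simp only [List.takeWhile_cons, List.dropWhile_cons, hyd, if_true, List.cons_append]
      rw [ih]

lemma bubblesort_perm_aux : ∀ (n : ℕ) (l : List ℕ), l.length ≤ n → (bubblesort l).Perm l := by
  intro n
  induction n with
  | zero =>
    intro l hl
    have : l = [] := List.length_eq_zero_iff.mp (Nat.le_zero.mp hl)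
    subst this; simp [bubblesort_nil]
  | succ n ih =>
    intro l hl
    cases l with
    | nil => simp [bubblesort_nil]
    | cons x xs =>
      rw [bubblesort_cons]
      set p : ℕ → Bool := fun y => decide (y < x) with hp
      have hsplit : xs.takeWhile p ++ xs.dropWhile p = xs := List.takeWhile_append_dropWhile
      have hlen : (xs.dropWhile p).length ≤ n := by
        have h1 : (xs.dropWhile p).length ≤ xs.length := (List.dropWhile_sublist p).length_le
        simp only [List.length_cons] at hl
        omega
      have hperm := ih _ hlen
      calc xs.takeWhile p ++ x :: bubblesort (xs.dropWhile p)
          ~ xs.takeWhile p ++ x :: xs.dropWhile p := by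
            exact List.Perm.append_left _ (hperm.cons x)
        _ ~ x :: (xs.takeWhile p ++ xs.dropWhile p) := List.perm_middle
        _ = x :: xs := by rw [hsplit]

lemma bubblesort_perm (l : List ℕ) : (bubblesort l).Perm l :=
  bubblesort_perm_aux l.length l le_rfl

lemma bubblesort_nodup {l : List ℕ} (h : l.Nodup) : (bubblesort l).Nodup :=
  (bubblesort_perm l).nodup_iff.mpr h

lemma range'_perm_eq {a m c k : ℕ} (h : (List.range' a m).Perm (List.range' c k))
    (hm : 0 < m) : a = c ∧ m = k := by
  have hlen : m = k := by
    have := h.length_eq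
    simpa using this
  subst hlen
  have ha : a ∈ List.range' c m := h.mem_iff.mp (by
    rw [List.mem_range'_1]; omega)
  have hc : c ∈ List.range' a m := h.symm.mem_iff.mp (by
    rw [List.mem_range'_1]; omega)
  rw [List.mem_range'_1] at ha hc
  omega
/-! ### order transfer under bubblesort -/

lemma subchain_left {A B : List ℕ} {u v : ℕ} (hn : (A ++ B).Nodup)
    (h : [u, v].Sublist (A ++ B)) (hv : v ∈ A) : [u, v].Sublist A := by
  induction A with
  | nil => simp at hv
  | cons a A' ih =>
    simp only [List.cons_append] at h hn
    have hna := List.nodup_cons.mp hn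
    rcases List.cons_sublist_cons'.mp h with h1 | ⟨rfl, h1⟩
    · rcases List.mem_cons.mp hv with rfl | hv'
      · exfalso
        have : v ∈ A' ++ B := List.singleton_sublist.mp (by
          have hv2 : [v] <+ [u, v] := by
            refine List.Sublist.cons _ (List.Sublist.refl _)
          exact hv2.trans h1)
        exact hna.1 this
      · exact (ih hna.2 h1 hv').cons a
    · rcases List.mem_cons.mp hv with rfl | hv'
      · exfalso
        have : v ∈ A' ++ B := List.singleton_sublist.mp h1
        exact hna.1 this
      · exact List.cons_sublist_cons.mpr (List.singleton_sublist.mpr hv')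

lemma mem_takeWhile_sub {x v : ℕ} : ∀ {l : List ℕ}, v ∈ l → v < x →
    (∀ w, [w, v].Sublist l → w < x) → v ∈ l.takeWhile (fun y => decide (y < x)) := by
  intro l
  induction l with
  | nil => intro h; simp at h
  | cons y t ih =>
    intro hv hvx hw
    by_cases hyv : y = v
    · subst hyv
      simp [List.takeWhile_cons, hvx]
    · have hvt : v ∈ t := by
        rcases List.mem_cons.mp hv with h | h
        · exact absurd h.symm hyv
        · exact h
      have hyx : y < x := hw y (List.cons_sublist_cons.mpr (List.singleton_sublist.mpr hvt))
      have h5 : v ∈ t.takeWhile (fun y => decide (y < x)) :=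
        ih hvt hvx (fun w hwv => hw w (hwv.cons y))
      have h6 : v ∈ y :: t.takeWhile (fun y => decide (y < x)) := List.mem_cons_of_mem _ h5
      simpa [List.takeWhile_cons, hyx] using h6

lemma dropWhile_head_ge {x d : ℕ} {dw : List ℕ} : ∀ {l : List ℕ},
    l.dropWhile (fun y => decide (y < x)) = d :: dw → x ≤ d := by
  intro l
  induction l with
  | nil => intro h; simp at h
  | cons y t ih =>
    intro h
    by_cases hyx : y < x
    · rw [List.dropWhile_cons_of_pos (by simpa using hyx)] at h
      exact ih h
    · rw [List.dropWhile_cons_of_neg (by simpa using hyx)] at h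
      cases h
      omega

lemma bub_keep_aux : ∀ (n : ℕ) (l : List ℕ), l.length ≤ n → l.Nodup →
    ∀ {u v : ℕ}, [u, v].Sublist l →
    (u < v ∨ ∃ w, u < w ∧ [w, v].Sublist l) → [u, v].Sublist (bubblesort l) := by
  intro n
  induction n with
  | zero =>
    intro l hl _ u v h _
    have : l = [] := List.length_eq_zero_iff.mp (Nat.le_zero.mp hl)
    subst this; simp at h
  | succ n ih =>
    intro l hl hn u v h hyp
    cases l with
    | nil => simp at h
    | cons x xs =>
      rw [bubblesort_cons]
      set p : ℕ → Bool := fun y => decide (y < x) with hp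
      set tw := xs.takeWhile p with htw
      set dw := xs.dropWhile p with hdw
      have hsplit : tw ++ dw = xs := List.takeWhile_append_dropWhile
      have hnxs : xs.Nodup := (List.nodup_cons.mp hn).2
      have hxxs : x ∉ xs := (List.nodup_cons.mp hn).1
      have hnsplit : (tw ++ dw).Nodup := by rw [hsplit]; exact hnxs
      have hlen : dw.length ≤ n := by
        have h1 : dw.length ≤ xs.length := (List.dropWhile_sublist p).length_le
        simp only [List.length_cons] at hl
        omega
      have hmemtw : ∀ {y}, y ∈ tw → y < x := by
        intro y hy
        have := List.mem_takeWhile_imp hy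
        rw [hp] at this
        simpa using this
      by_cases hux : u = x
      · subst hux
        -- u is the head
        have hv : v ∈ xs := by
          rcases List.cons_sublist_cons'.mp h with h1 | ⟨_, h1⟩
          · exfalso
            exact hxxs (List.singleton_sublist.mp (by
              have hu2 : [u] <+ [u, v] := List.cons_sublist_cons.mpr (List.nil_sublist _)
              exact hu2.trans h1))
          · exact List.singleton_sublist.mp h1
        have hvdw : v ∈ dw := by
          rcases List.mem_append.mp (by rw [hsplit]; exact hv : v ∈ tw ++ dw) with hvt | hvd
          · exfalso
            have hvx : v < u := hmemtw hvt
            rcases hyp with h1 | ⟨w, hw, hwv⟩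
            · omega
            · rcases List.cons_sublist_cons'.mp hwv with h2 | ⟨rfl, _⟩
              · have hwtw : [w, v].Sublist tw := subchain_left hnsplit (by rw [hsplit]; exact h2) hvt
                have : w ∈ tw := List.singleton_sublist.mp (by
                  have : [w] <+ [w, v] := List.cons_sublist_cons.mpr (List.nil_sublist _)
                  exact this.trans hwtw)
                have := hmemtw this
                omega
              · omega
          · exact hvd
        have hvB : v ∈ bubblesort dw := (bubblesort_perm dw).mem_iff.mpr hvdw
        have : [u, v].Sublist (u :: bubblesort dw) :=
          List.cons_sublist_cons.mpr (List.singleton_sublist.mpr hvB)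
        exact this.trans (List.sublist_append_right tw _)
      · -- u in the tail
        have hxs : [u, v].Sublist xs := by
          rcases List.cons_sublist_cons'.mp h with h1 | ⟨h1, _⟩
          · exact h1
          · exact absurd h1 hux
        have hu : u ∈ xs := List.singleton_sublist.mp (by
          have : [u] <+ [u, v] := List.cons_sublist_cons.mpr (List.nil_sublist _)
          exact this.trans hxs)
        have hv : v ∈ xs := List.singleton_sublist.mp (by
          have : [v] <+ [u, v] := by
            refine List.Sublist.cons _ (List.Sublist.refl _)
          exact this.trans hxs)
        rcases List.mem_append.mp (by rw [hsplit]; exact hu : u ∈ tw ++ dw) with hut | hud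
        · -- u in takeWhile part: order always preserved
          rcases List.mem_append.mp (by rw [hsplit]; exact hv : v ∈ tw ++ dw) with hvt | hvd
          · have : [u, v].Sublist tw := subchain_left hnsplit (by rw [hsplit]; exact hxs) hvt
            exact this.trans (List.sublist_append_left tw _)
          · have hvB : v ∈ x :: bubblesort dw := by
              exact List.mem_cons_of_mem _ ((bubblesort_perm dw).mem_iff.mpr hvd)
            exact sub2_of_mem_mem hut hvB
        · -- u in dropWhile part: recurse
          have hdwsub : [u, v].Sublist dw := subchain_right hnsplit (by rw [hsplit]; exact hxs) hud
          obtain ⟨d0, dw', hd0⟩ : ∃ d0 dw', dw = d0 :: dw' := by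
            cases hdweq : dw with
            | nil => rw [hdweq] at hud; simp at hud
            | cons a b => exact ⟨a, b, rfl⟩
          have hd0x : x ≤ d0 := dropWhile_head_ge (by rw [← hdw, hd0])
          have hnd : dw.Nodup := hnsplit.of_append_right
          -- helper to produce a witness inside dw when the outer witness is ≥ x
          have dwitness : u < x → ∃ w, u < w ∧ [w, v].Sublist dw := by
            intro hux2
            refine ⟨d0, by omega, ?_⟩
            rw [hd0] at hdwsub ⊢
            have hud0 : u ≠ d0 := by omega
            have huv' : [u, v].Sublist dw' := by
              rcases List.cons_sublist_cons'.mp hdwsub with h1 | ⟨h1, _⟩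
              · exact h1
              · exact absurd h1 hud0
            have hvdw' : v ∈ dw' := List.singleton_sublist.mp (by
              have : [v] <+ [u, v] := by
                refine List.Sublist.cons _ (List.Sublist.refl _)
              exact this.trans huv')
            exact List.cons_sublist_cons.mpr (List.singleton_sublist.mpr hvdw')
          have hyp' : u < v ∨ ∃ w, u < w ∧ [w, v].Sublist dw := by
            rcases hyp with h1 | ⟨w, hw, hwv⟩
            · exact Or.inl h1
            · rcases List.cons_sublist_cons'.mp hwv with h2 | ⟨rfl, _⟩
              · -- w ∈ xs
                have hwxs : w ∈ xs := List.singleton_sublist.mp (by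
                  have : [w] <+ [w, v] := List.cons_sublist_cons.mpr (List.nil_sublist _)
                  exact this.trans h2)
                rcases List.mem_append.mp (by rw [hsplit]; exact hwxs : w ∈ tw ++ dw) with hwt | hwd
                · exact Or.inr (dwitness (by have := hmemtw hwt; omega))
                · exact Or.inr ⟨w, hw, subchain_right hnsplit (by rw [hsplit]; exact h2) hwd⟩
              · exact Or.inr (dwitness hw)
          have := ih dw hlen hnd hdwsub hyp'
          exact (this.cons x).trans (List.sublist_append_right tw _)

lemma bub_keep {l : List ℕ} (hn : l.Nodup) {u v : ℕ} (h : [u, v].Sublist l)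
    (hyp : u < v ∨ ∃ w, u < w ∧ [w, v].Sublist l) : [u, v].Sublist (bubblesort l) :=
  bub_keep_aux l.length l le_rfl hn h hyp

lemma bub_flip_aux : ∀ (n : ℕ) (l : List ℕ), l.length ≤ n → l.Nodup →
    ∀ {u v : ℕ}, [u, v].Sublist l → v < u →
    (∀ w, [w, v].Sublist l → w ≠ u → w < u) → [v, u].Sublist (bubblesort l) := by
  intro n
  induction n with
  | zero =>
    intro l hl _ u v h _ _
    have : l = [] := List.length_eq_zero_iff.mp (Nat.le_zero.mp hl)
    subst this; simp at h
  | succ n ih =>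
    intro l hl hn u v h hvu hyp
    cases l with
    | nil => simp at h
    | cons x xs =>
      rw [bubblesort_cons]
      set p : ℕ → Bool := fun y => decide (y < x) with hp
      set tw := xs.takeWhile p with htw
      set dw := xs.dropWhile p with hdw
      have hsplit : tw ++ dw = xs := List.takeWhile_append_dropWhile
      have hnxs : xs.Nodup := (List.nodup_cons.mp hn).2
      have hxxs : x ∉ xs := (List.nodup_cons.mp hn).1
      have hnsplit : (tw ++ dw).Nodup := by rw [hsplit]; exact hnxs
      have hlen : dw.length ≤ n := by
        have h1 : dw.length ≤ xs.length := (List.dropWhile_sublist p).length_le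
        simp only [List.length_cons] at hl
        omega
      by_cases hux : u = x
      · subst hux
        have hv : v ∈ xs := by
          rcases List.cons_sublist_cons'.mp h with h1 | ⟨_, h1⟩
          · exfalso
            exact hxxs (List.singleton_sublist.mp (by
              have hu2 : [u] <+ [u, v] := List.cons_sublist_cons.mpr (List.nil_sublist _)
              exact hu2.trans h1))
          · exact List.singleton_sublist.mp h1
        have hvtw : v ∈ tw := by
          apply mem_takeWhile_sub hv hvu
          intro w hwv
          have hwxs : w ∈ xs := List.singleton_sublist.mp (by
            have : [w] <+ [w, v] := List.cons_sublist_cons.mpr (List.nil_sublist _)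
            exact this.trans hwv)
          have hwne : w ≠ u := fun hh => hxxs (hh ▸ hwxs)
          exact hyp w (hwv.cons u) hwne
        exact sub2_of_mem_mem hvtw (List.mem_cons_self)
      · have hxs : [u, v].Sublist xs := by
          rcases List.cons_sublist_cons'.mp h with h1 | ⟨h1, _⟩
          · exact h1
          · exact absurd h1 hux
        have hv : v ∈ xs := List.singleton_sublist.mp (by
          have : [v] <+ [u, v] := by
            refine List.Sublist.cons _ (List.Sublist.refl _)
          exact this.trans hxs)
        have hu : u ∈ xs := List.singleton_sublist.mp (by
          have : [u] <+ [u, v] := List.cons_sublist_cons.mpr (List.nil_sublist _)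
          exact this.trans hxs)
        have hxu : x < u := by
          exact hyp x (List.cons_sublist_cons.mpr (List.singleton_sublist.mpr hv))
            (fun hh => hux hh.symm)
        have hud : u ∈ dw := by
          rcases List.mem_append.mp (by rw [hsplit]; exact hu : u ∈ tw ++ dw) with hut | hud
          · exfalso
            have := List.mem_takeWhile_imp hut
            rw [hp] at this
            simp at this
            omega
          · exact hud
        have hdwsub : [u, v].Sublist dw := subchain_right hnsplit (by rw [hsplit]; exact hxs) hud
        have hnd : dw.Nodup := hnsplit.of_append_right
        have hyp' : ∀ w, [w, v].Sublist dw → w ≠ u → w < u := by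
          intro w hwv hwne
          exact hyp w ((hwv.trans (List.dropWhile_sublist p)).cons x) hwne
        have := ih dw hlen hnd hdwsub hvu hyp'
        exact (this.cons x).trans (List.sublist_append_right tw _)

lemma bub_flip {l : List ℕ} (hn : l.Nodup) {u v : ℕ} (h : [u, v].Sublist l) (hvu : v < u)
    (hyp : ∀ w, [w, v].Sublist l → w ≠ u → w < u) : [v, u].Sublist (bubblesort l) :=
  bub_flip_aux l.length l le_rfl hn h hvu hyp
/-! ### psb: inversions in the output -/

lemma psb_stack_before : ∀ (M : List ℕ) {rest s' : List ℕ} {t b c y : ℕ},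
    t ≤ b → b ∈ t :: s' → b < c → y ∈ rest →
    [b, y].Sublist (psbAux (M ++ c :: rest) (t :: s')) := by
  intro M
  induction M with
  | nil =>
    intro rest s' t b c y htb hb hbc hy
    rw [List.nil_append, psbAux_cons_cons, if_neg (by omega), if_neg (by omega)]
    exact sub2_of_mem_mem hb (mem_psbAux (Or.inl hy))
  | cons x M' ih =>
    intro rest s' t b c y htb hb hbc hy
    rw [List.cons_append, psbAux_cons_cons]
    split_ifs with h1 h2
    · exact ih (by omega) (List.mem_cons_of_mem _ hb) hbc hy
    · exact (ih htb hb hbc hy).cons x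
    · refine sub2_of_mem_mem hb (mem_psbAux (Or.inl ?_))
      exact List.mem_append.mpr (Or.inr (List.mem_cons_of_mem _ hy))

lemma psb_231 : ∀ (A : List ℕ) {s B C : List ℕ} {u v w : ℕ},
    w ∈ C → w < u → u < v →
    [u, w].Sublist (psbAux (A ++ u :: (B ++ v :: C)) s) := by
  intro A
  induction A with
  | nil =>
    intro s B C u v w hw hwu huv
    cases s with
    | nil =>
      rw [List.nil_append, psbAux_cons_nil]
      exact psb_stack_before B le_rfl (List.mem_cons_self) huv hw
    | cons t s' =>
      rw [List.nil_append, psbAux_cons_cons]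
      split_ifs with h1 h2
      · exact psb_stack_before B le_rfl (List.mem_cons_self) huv hw
      · refine List.cons_sublist_cons.mpr (List.singleton_sublist.mpr ?_)
        exact mem_psbAux (Or.inl (List.mem_append.mpr (Or.inr (List.mem_cons_of_mem _ hw))))
      · exact (psb_stack_before B (s' := []) le_rfl (List.mem_cons_self) huv hw).trans
          (List.sublist_append_right _ _)
  | cons x A' ih =>
    intro s B C u v w hw hwu huv
    cases s with
    | nil =>
      rw [List.cons_append, psbAux_cons_nil]
      exact ih hw hwu huv
    | cons t s' =>
      rw [List.cons_append, psbAux_cons_cons]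
      split_ifs with h1 h2
      · exact ih hw hwu huv
      · exact (ih hw hwu huv).cons x
      · exact (ih hw hwu huv).trans (List.sublist_append_right _ _)

lemma psb_d : ∀ (M : List ℕ) {R s' : List ℕ} {t b d c : ℕ},
    t ≤ b → b ∈ t :: s' → d ∈ t :: s' → b < c →
    [d, c].Sublist (psbAux (M ++ c :: R) (t :: s')) := by
  intro M
  induction M with
  | nil =>
    intro R s' t b d c htb hb hd hbc
    rw [List.nil_append, psbAux_cons_cons, if_neg (by omega), if_neg (by omega)]
    exact sub2_of_mem_mem hd (mem_psbAux (Or.inr (List.mem_singleton.mpr rfl)))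
  | cons x M' ih =>
    intro R s' t b d c htb hb hd hbc
    rw [List.cons_append, psbAux_cons_cons]
    split_ifs with h1 h2
    · exact ih (by omega) (List.mem_cons_of_mem _ hb) (List.mem_cons_of_mem _ hd) hbc
    · exact (ih htb hb hd hbc).cons x
    · refine sub2_of_mem_mem hd (mem_psbAux (Or.inl ?_))
      exact List.mem_append.mpr (Or.inr (List.mem_cons_self))

lemma psb_db : ∀ (B₁ : List ℕ) {B₂ B₃ R s' : List ℕ} {t d b a c : ℕ},
    d ∈ t :: s' → a < b → b < c → c < d →
    ∃ p q, q < p ∧ [p, q].Sublist (psbAux (B₁ ++ b :: (B₂ ++ a :: (B₃ ++ c :: R))) (t :: s')) := by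
  intro B₁
  induction B₁ with
  | nil =>
    intro B₂ B₃ R s' t d b a c hd hab hbc hcd
    rw [List.nil_append, psbAux_cons_cons]
    split_ifs with h1 h2
    · refine ⟨d, c, hcd, ?_⟩
      have hassoc : B₂ ++ a :: (B₃ ++ c :: R) = (B₂ ++ a :: B₃) ++ c :: R := by simp
      rw [hassoc]
      exact psb_d (B₂ ++ a :: B₃) le_rfl (List.mem_cons_self) (List.mem_cons_of_mem _ hd) hbc
    · refine ⟨b, a, hab, ?_⟩
      refine List.cons_sublist_cons.mpr (List.singleton_sublist.mpr ?_)
      exact mem_psbAux (Or.inl (List.mem_append.mpr (Or.inr (List.mem_cons_self))))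
    · refine ⟨d, c, hcd, ?_⟩
      refine sub2_of_mem_mem hd (mem_psbAux (Or.inl ?_))
      refine List.mem_append.mpr (Or.inr (List.mem_cons_of_mem _ ?_))
      exact List.mem_append.mpr (Or.inr (List.mem_cons_self))
  | cons x B' ih =>
    intro B₂ B₃ R s' t d b a c hd hab hbc hcd
    rw [List.cons_append, psbAux_cons_cons]
    split_ifs with h1 h2
    · exact ih (List.mem_cons_of_mem _ hd) hab hbc hcd
    · obtain ⟨p, q, hpq, hs⟩ := ih hd hab hbc hcd
      exact ⟨p, q, hpq, hs.cons x⟩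
    · refine ⟨d, c, hcd, ?_⟩
      refine sub2_of_mem_mem hd (mem_psbAux (Or.inl ?_))
      refine List.mem_append.mpr (Or.inr (List.mem_cons_of_mem _ ?_))
      refine List.mem_append.mpr (Or.inr (List.mem_cons_of_mem _ ?_))
      exact List.mem_append.mpr (Or.inr (List.mem_cons_self))

lemma psb_da : ∀ (A : List ℕ) {B₁ B₂ B₃ R s : List ℕ} {d b a c : ℕ},
    a < b → b < c → c < d →
    ∃ p q, q < p ∧
      [p, q].Sublist (psbAux (A ++ d :: (B₁ ++ b :: (B₂ ++ a :: (B₃ ++ c :: R)))) s) := by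
  intro A
  induction A with
  | nil =>
    intro B₁ B₂ B₃ R s d b a c hab hbc hcd
    have hcmem : c ∈ B₁ ++ b :: (B₂ ++ a :: (B₃ ++ c :: R)) := by
      refine List.mem_append.mpr (Or.inr (List.mem_cons_of_mem _ ?_))
      refine List.mem_append.mpr (Or.inr (List.mem_cons_of_mem _ ?_))
      exact List.mem_append.mpr (Or.inr (List.mem_cons_self))
    cases s with
    | nil =>
      rw [List.nil_append, psbAux_cons_nil]
      exact psb_db B₁ (List.mem_singleton.mpr rfl) hab hbc hcd
    | cons t s' =>
      rw [List.nil_append, psbAux_cons_cons]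
      split_ifs with h1 h2
      · exact psb_db B₁ (List.mem_cons_self) hab hbc hcd
      · refine ⟨d, c, hcd, ?_⟩
        refine List.cons_sublist_cons.mpr (List.singleton_sublist.mpr ?_)
        exact mem_psbAux (Or.inl hcmem)
      · obtain ⟨p, q, hpq, hs⟩ := psb_db B₁ (s' := []) (List.mem_singleton.mpr rfl) hab hbc hcd
        exact ⟨p, q, hpq, hs.trans (List.sublist_append_right _ _)⟩
  | cons x A' ih =>
    intro B₁ B₂ B₃ R s d b a c hab hbc hcd
    cases s with
    | nil =>
      rw [List.cons_append, psbAux_cons_nil]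
      exact ih hab hbc hcd
    | cons t s' =>
      rw [List.cons_append, psbAux_cons_cons]
      split_ifs with h1 h2
      · exact ih hab hbc hcd
      · obtain ⟨p, q, hpq, hs⟩ := ih hab hbc hcd
        exact ⟨p, q, hpq, hs.cons x⟩
      · obtain ⟨p, q, hpq, hs⟩ := ih hab hbc hcd
        exact ⟨p, q, hpq, hs.trans (List.sublist_append_right _ _)⟩

lemma psb_unsorted_of_231 {σ : List ℕ} {u v w : ℕ} (h : [u, v, w].Sublist σ)
    (hwu : w < u) (huv : u < v) : ∃ p q, q < p ∧ [p, q].Sublist (psb σ) := by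
  obtain ⟨A, R, rfl, h1⟩ := cons_sublist_split h
  obtain ⟨B, C, rfl, h2⟩ := cons_sublist_split h1
  have hw : w ∈ C := List.singleton_sublist.mp h2
  exact ⟨u, w, hwu, psb_231 A hw hwu huv⟩

lemma psb_unsorted_of_4213 {σ : List ℕ} {d b a c : ℕ} (h : [d, b, a, c].Sublist σ)
    (hab : a < b) (hbc : b < c) (hcd : c < d) :
    ∃ p q, q < p ∧ [p, q].Sublist (psb σ) := by
  obtain ⟨A, R1, rfl, h1⟩ := cons_sublist_split h
  obtain ⟨B₁, R2, rfl, h2⟩ := cons_sublist_split h1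
  obtain ⟨B₂, R3, rfl, h3⟩ := cons_sublist_split h2
  obtain ⟨B₃, R4, rfl, h4⟩ := cons_sublist_split h3
  exact psb_da A hab hbc hcd
/-! ### psb sorts 231- and 4213-avoiding permutations -/

def No231 (l : List ℕ) : Prop :=
  ¬ ∃ u v w, [u, v, w].Sublist l ∧ w < u ∧ u < v

def No4213 (l : List ℕ) : Prop :=
  ¬ ∃ d b a c, [d, b, a, c].Sublist l ∧ a < b ∧ b < c ∧ c < d

lemma No231.sublist {l l' : List ℕ} (h : No231 l) (hs : l'.Sublist l) : No231 l' := by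
  rintro ⟨u, v, w, hsub, h1, h2⟩
  exact h ⟨u, v, w, hsub.trans hs, h1, h2⟩

lemma No4213.sublist {l l' : List ℕ} (h : No4213 l) (hs : l'.Sublist l) : No4213 l' := by
  rintro ⟨d, b, a, c, hsub, h1, h2, h3⟩
  exact h ⟨d, b, a, c, hsub.trans hs, h1, h2, h3⟩

lemma sub_build3 {l1 l2 : List ℕ} {a x p : ℕ} (ha : a ∈ l1) (hp : p ∈ l2) :
    [a, x, p].Sublist (l1 ++ x :: l2) := by
  have : [a] ++ x :: [p] <+ l1 ++ x :: l2 :=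
    (List.singleton_sublist.mpr ha).append
      (List.cons_sublist_cons.mpr (List.singleton_sublist.mpr hp))
  simpa using this

lemma sub_build4 {l1 l2 : List ℕ} {a x p q : ℕ} (ha : a ∈ l1) (hpq : [p, q].Sublist l2) :
    [a, x, p, q].Sublist (l1 ++ x :: l2) := by
  have : [a] ++ x :: [p, q] <+ l1 ++ x :: l2 :=
    (List.singleton_sublist.mpr ha).append (List.cons_sublist_cons.mpr hpq)
  simpa using this

lemma psb_sorts_aux : ∀ (xs : List ℕ) (a m c k : ℕ), 0 < m →
    (((List.range' a m).reverse ++ xs).Perm (List.range' c k)) →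
    No231 ((List.range' a m).reverse ++ xs) →
    No4213 ((List.range' a m).reverse ++ xs) →
    psbAux xs (List.range' a m) = List.range' c k := by
  intro xs
  induction xs with
  | nil =>
    intro a m c k hm hperm _ _
    rw [psbAux_nil]
    have h1 : (List.range' a m).Perm (List.range' c k) := by
      refine ((List.reverse_perm _).symm.trans ?_)
      simpa using hperm
    obtain ⟨rfl, rfl⟩ := range'_perm_eq h1 hm
    rfl
  | cons x xs' ih =>
    intro a m c k hm hperm h231 h4213
    set rev := (List.range' a m).reverse with hrev
    have hmem_virt : ∀ {y : ℕ}, y ∈ rev ++ x :: xs' → c ≤ y ∧ y < c + k := by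
      intro y hy
      have := hperm.mem_iff.mp hy
      exact List.mem_range'_1.mp this
    have hxv : x ∈ rev ++ x :: xs' := List.mem_append.mpr (Or.inr (List.mem_cons_self))
    have hav : a ∈ rev ++ x :: xs' := by
      refine List.mem_append.mpr (Or.inl ?_)
      rw [hrev, List.mem_reverse, List.mem_range'_1]
      omega
    have hnd : (rev ++ x :: xs').Nodup := hperm.nodup_iff.mpr (List.nodup_range' (s := c) (n := k))
    have hxa : x ≠ a := by
      intro hh
      have hdisj := List.disjoint_of_nodup_append hnd
      exact hdisj (by rw [hh] at hxv ⊢; rw [hrev, List.mem_reverse, List.mem_range'_1]; omega)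
        (List.mem_cons_self)
    have hk1 : 0 < k := by
      have := hperm.length_eq
      simp at this
      omega
    have hcv : c ∈ rev ++ x :: xs' := hperm.symm.mem_iff.mp (by
      rw [List.mem_range'_1]; omega)
    obtain ⟨m', rfl⟩ : ∃ m', m = m' + 1 := ⟨m - 1, by omega⟩
    have hsrange : List.range' a (m' + 1) = a :: List.range' (a + 1) m' := List.range'_succ
    rw [hsrange, psbAux_cons_cons]
    have hbound := hmem_virt hxv
    have habound := hmem_virt hav
    split_ifs with h1 h2
    · -- push
      have hstack : x :: a :: List.range' (a + 1) m' = List.range' x (m' + 2) := by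
        rw [List.range'_succ, h1, ← hsrange]
      rw [hstack]
      have hvirt : (List.range' x (m' + 2)).reverse ++ xs' = rev ++ x :: xs' := by
        rw [← hstack, hrev, hsrange]
        simp
      refine ih x (m' + 2) c k (by omega) ?_ ?_ ?_ <;> rw [hvirt]
      · exact hperm
      · exact h231
      · exact h4213
    · -- bypass
      have hxc : x = c := by
        by_contra hxc
        have hcx : c < x := by omega
        have hcmem : c ∈ xs' := by
          rcases List.mem_append.mp hcv with h | h
          · exfalso
            rw [hrev, List.mem_reverse, List.mem_range'_1] at h
            omega
          · rcases List.mem_cons.mp h with h | h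
            · omega
            · exact h
        have hwmem : a - 1 ∈ xs' := by
          have : a - 1 ∈ rev ++ x :: xs' := hperm.symm.mem_iff.mp (by
            rw [List.mem_range'_1]; omega)
          rcases List.mem_append.mp this with h | h
          · exfalso
            rw [hrev, List.mem_reverse, List.mem_range'_1] at h
            omega
          · rcases List.mem_cons.mp h with h | h
            · omega
            · exact h
        have hamem : a ∈ rev := by
          rw [hrev, List.mem_reverse, List.mem_range'_1]; omega
        have hne : c ≠ a - 1 := by omega
        rcases sub2_total hcmem hwmem with h | h | h
        · exact hne h
        · -- c before a-1 : 4213 pattern (a, x, c, a-1)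
          exact h4213 ⟨a, x, c, a - 1, sub_build4 hamem h, hcx, by omega, by omega⟩
        · -- a-1 before c : 231 pattern (x, a-1, c)
          refine h231 ⟨x, a - 1, c, ?_, hcx, by omega⟩
          have hsub : [x, a - 1, c].Sublist (x :: xs') := by
            refine List.cons_sublist_cons.mpr ?_
            exact h
          exact hsub.trans (List.sublist_append_right rev _)
      subst hxc
      have hperm' : (rev ++ xs').Perm (List.range' (x + 1) (k - 1)) := by
        have hp1 : (rev ++ x :: xs').Perm (x :: (rev ++ xs')) := List.perm_middle
        have hp2 : (x :: (rev ++ xs')).Perm (List.range' x k) := hp1.symm.trans hperm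
        have hrk : List.range' x k = x :: List.range' (x + 1) (k - 1) := by
          obtain ⟨k', rfl⟩ : ∃ k', k = k' + 1 := ⟨k - 1, by omega⟩
          rw [List.range'_succ]
          simp
        rw [hrk] at hp2
        exact hp2.cons_inv
      have hsub' : (rev ++ xs').Sublist (rev ++ x :: xs') :=
        (List.Sublist.refl rev).append (List.sublist_cons_self _ _)
      have := ih a (m' + 1) (x + 1) (k - 1) hm hperm'
        ((h231.sublist hsub')) ((h4213.sublist hsub'))
      rw [← hsrange] at *
      rw [this]
      obtain ⟨k', rfl⟩ : ∃ k', k = k' + 1 := ⟨k - 1, by omega⟩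
      rw [List.range'_succ]
      simp
    · -- flush
      have hax : a < x := by omega
      have hac : a = c := by
        by_contra hac
        have hca : c < a := by omega
        have hcmem : c ∈ xs' := by
          rcases List.mem_append.mp hcv with h | h
          · exfalso
            rw [hrev, List.mem_reverse, List.mem_range'_1] at h
            omega
          · rcases List.mem_cons.mp h with h | h
            · omega
            · exact h
        have hamem : a ∈ rev := by
          rw [hrev, List.mem_reverse, List.mem_range'_1]; omega
        exact h231 ⟨a, x, c, sub_build3 hamem hcmem, hca, hax⟩
      subst hac
      have hlen : k = (m' + 1) + 1 + xs'.length := by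
        have := hperm.length_eq
        simp [hrev] at this
        omega
      have hmk : m' + 1 < k := by omega
      have hperm2 : (x :: xs').Perm (List.range' (a + (m' + 1)) (k - (m' + 1))) := by
        have hsplit : List.range' a (m' + 1) ++ List.range' (a + (m' + 1)) (k - (m' + 1)) =
            List.range' a k := by
          have := List.range'_append (s := a) (m := m' + 1) (n := k - (m' + 1)) (step := 1)
          simp only [one_mul] at this
          rw [this]
          congr 1
          omega
        have hrevperm : rev.Perm (List.range' a (m' + 1)) := List.reverse_perm _
        have : (List.range' a (m' + 1) ++ (x :: xs')).Perm
            (List.range' a (m' + 1) ++ List.range' (a + (m' + 1)) (k - (m' + 1))) := by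
          refine ((hrevperm.symm.append_right _).trans ?_).trans (by rw [hsplit])
          · exact hperm
        exact (List.perm_append_left_iff _).mp this
      have hsubx : (x :: xs').Sublist (rev ++ x :: xs') := List.sublist_append_right _ _
      have hIH := ih x 1 (a + (m' + 1)) (k - (m' + 1)) (by omega)
        (by simpa using hperm2)
        (by refine (h231.sublist ?_); simpa using hsubx)
        (by refine (h4213.sublist ?_); simpa using hsubx)
      have hx1 : List.range' x 1 = [x] := by simp
      rw [hx1] at hIH
      rw [← hsrange, hIH]
      have := List.range'_append (s := a) (m := m' + 1) (n := k - (m' + 1)) (step := 1)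
      simp only [one_mul] at this
      rw [this]
      congr 1
      omega

lemma psb_sorts {σ : List ℕ} {n : ℕ} (hperm : σ.Perm (List.range' 1 n))
    (h231 : No231 σ) (h4213 : No4213 σ) : psb σ = List.range' 1 n := by
  cases σ with
  | nil =>
    have : n = 0 := by have := hperm.length_eq; simp at this; omega
    subst this; rfl
  | cons x xs =>
    have h1 : List.range' x 1 = [x] := by simp
    have := psb_sorts_aux xs x 1 1 n (by omega) (by simpa [h1] using hperm)
      (by simpa [h1] using h231) (by simpa [h1] using h4213)
    rw [psb, psbAux_cons_nil, ← h1, this]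
/-! ### translating `Contains` into explicit chains -/

lemma list_len4 {l : List ℕ} (h : l.length = 4) : ∃ a b c d, l = [a, b, c, d] := by
  match l, h with
  | [a, b, c, d], _ => exact ⟨a, b, c, d, rfl⟩

lemma list_len5 {l : List ℕ} (h : l.length = 5) : ∃ a b c d e, l = [a, b, c, d, e] := by
  match l, h with
  | [a, b, c, d, e], _ => exact ⟨a, b, c, d, e, rfl⟩

lemma contains4_iff {l : List ℕ} {p : List ℕ} (hp : p.length = 4) :
    Contains l p ↔ ∃ a b c d, [a, b, c, d].Sublist l ∧
      (∀ i j : ℕ, i < 4 → j < 4 → ([a,b,c,d][i]! < [a,b,c,d][j]! ↔ p[i]! < p[j]!)) := by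
  constructor
  · rintro ⟨τ, hsub, hlen, hiso⟩
    rw [hp] at hlen
    obtain ⟨a, b, c, d, rfl⟩ := list_len4 hlen
    exact ⟨a, b, c, d, hsub, by simpa using hiso⟩
  · rintro ⟨a, b, c, d, hsub, hiso⟩
    exact ⟨[a, b, c, d], hsub, by simp [hp], by simpa using hiso⟩

lemma contains5_iff {l : List ℕ} {p : List ℕ} (hp : p.length = 5) :
    Contains l p ↔ ∃ a b c d e, [a, b, c, d, e].Sublist l ∧
      (∀ i j : ℕ, i < 5 → j < 5 → ([a,b,c,d,e][i]! < [a,b,c,d,e][j]! ↔ p[i]! < p[j]!)) := by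
  constructor
  · rintro ⟨τ, hsub, hlen, hiso⟩
    rw [hp] at hlen
    obtain ⟨a, b, c, d, e, rfl⟩ := list_len5 hlen
    exact ⟨a, b, c, d, e, hsub, by simpa using hiso⟩
  · rintro ⟨a, b, c, d, e, hsub, hiso⟩
    exact ⟨[a, b, c, d, e], hsub, by simp [hp], by simpa using hiso⟩

lemma contains_2341 {l : List ℕ} :
    Contains l [2, 3, 4, 1] ↔ ∃ a b c d, [a, b, c, d].Sublist l ∧ d < a ∧ a < b ∧ b < c := by
  rw [contains4_iff (by simp)]
  constructor
  · rintro ⟨a, b, c, d, hsub, hiso⟩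
    refine ⟨a, b, c, d, hsub, ?_, ?_, ?_⟩
    · have h := (hiso 3 0 (by norm_num) (by norm_num)).mpr (by simp)
      simpa using h
    · have h := (hiso 0 1 (by norm_num) (by norm_num)).mpr (by simp)
      simpa using h
    · have h := (hiso 1 2 (by norm_num) (by norm_num)).mpr (by simp)
      simpa using h
  · rintro ⟨a, b, c, d, hsub, h1, h2, h3⟩
    refine ⟨a, b, c, d, hsub, ?_⟩
    intro i j hi hj
    interval_cases i <;> interval_cases j <;> simp <;> omega

lemma contains_2431 {l : List ℕ} :
    Contains l [2, 4, 3, 1] ↔ ∃ a b c d, [a, b, c, d].Sublist l ∧ d < a ∧ a < c ∧ c < b := by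
  rw [contains4_iff (by simp)]
  constructor
  · rintro ⟨a, b, c, d, hsub, hiso⟩
    refine ⟨a, b, c, d, hsub, ?_, ?_, ?_⟩
    · have h := (hiso 3 0 (by norm_num) (by norm_num)).mpr (by simp)
      simpa using h
    · have h := (hiso 0 2 (by norm_num) (by norm_num)).mpr (by simp)
      simpa using h
    · have h := (hiso 2 1 (by norm_num) (by norm_num)).mpr (by simp)
      simpa using h
  · rintro ⟨a, b, c, d, hsub, h1, h2, h3⟩
    refine ⟨a, b, c, d, hsub, ?_⟩
    intro i j hi hj
    interval_cases i <;> interval_cases j <;> simp <;> omega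

lemma contains_3241 {l : List ℕ} :
    Contains l [3, 2, 4, 1] ↔ ∃ a b c d, [a, b, c, d].Sublist l ∧ d < b ∧ b < a ∧ a < c := by
  rw [contains4_iff (by simp)]
  constructor
  · rintro ⟨a, b, c, d, hsub, hiso⟩
    refine ⟨a, b, c, d, hsub, ?_, ?_, ?_⟩
    · have h := (hiso 3 1 (by norm_num) (by norm_num)).mpr (by simp)
      simpa using h
    · have h := (hiso 1 0 (by norm_num) (by norm_num)).mpr (by simp)
      simpa using h
    · have h := (hiso 0 2 (by norm_num) (by norm_num)).mpr (by simp)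
      simpa using h
  · rintro ⟨a, b, c, d, hsub, h1, h2, h3⟩
    refine ⟨a, b, c, d, hsub, ?_⟩
    intro i j hi hj
    interval_cases i <;> interval_cases j <;> simp <;> omega

lemma contains_4231 {l : List ℕ} :
    Contains l [4, 2, 3, 1] ↔ ∃ a b c d, [a, b, c, d].Sublist l ∧ d < b ∧ b < c ∧ c < a := by
  rw [contains4_iff (by simp)]
  constructor
  · rintro ⟨a, b, c, d, hsub, hiso⟩
    refine ⟨a, b, c, d, hsub, ?_, ?_, ?_⟩
    · have h := (hiso 3 1 (by norm_num) (by norm_num)).mpr (by simp)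
      simpa using h
    · have h := (hiso 1 2 (by norm_num) (by norm_num)).mpr (by simp)
      simpa using h
    · have h := (hiso 2 0 (by norm_num) (by norm_num)).mpr (by simp)
      simpa using h
  · rintro ⟨a, b, c, d, hsub, h1, h2, h3⟩
    refine ⟨a, b, c, d, hsub, ?_⟩
    intro i j hi hj
    interval_cases i <;> interval_cases j <;> simp <;> omega

lemma contains_45213 {l : List ℕ} :
    Contains l [4, 5, 2, 1, 3] ↔ ∃ a b c d e, [a, b, c, d, e].Sublist l ∧
      d < c ∧ c < e ∧ e < a ∧ a < b := by
  rw [contains5_iff (by simp)]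
  constructor
  · rintro ⟨a, b, c, d, e, hsub, hiso⟩
    refine ⟨a, b, c, d, e, hsub, ?_, ?_, ?_, ?_⟩
    · have h := (hiso 3 2 (by norm_num) (by norm_num)).mpr (by simp)
      simpa using h
    · have h := (hiso 2 4 (by norm_num) (by norm_num)).mpr (by simp)
      simpa using h
    · have h := (hiso 4 0 (by norm_num) (by norm_num)).mpr (by simp)
      simpa using h
    · have h := (hiso 0 1 (by norm_num) (by norm_num)).mpr (by simp)
      simpa using h
  · rintro ⟨a, b, c, d, e, hsub, h1, h2, h3, h4⟩
    refine ⟨a, b, c, d, e, hsub, ?_⟩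
    intro i j hi hj
    interval_cases i <;> interval_cases j <;> simp <;> omega

lemma contains_54213 {l : List ℕ} :
    Contains l [5, 4, 2, 1, 3] ↔ ∃ a b c d e, [a, b, c, d, e].Sublist l ∧
      d < c ∧ c < e ∧ e < b ∧ b < a := by
  rw [contains5_iff (by simp)]
  constructor
  · rintro ⟨a, b, c, d, e, hsub, hiso⟩
    refine ⟨a, b, c, d, e, hsub, ?_, ?_, ?_, ?_⟩
    · have h := (hiso 3 2 (by norm_num) (by norm_num)).mpr (by simp)
      simpa using h
    · have h := (hiso 2 4 (by norm_num) (by norm_num)).mpr (by simp)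
      simpa using h
    · have h := (hiso 4 1 (by norm_num) (by norm_num)).mpr (by simp)
      simpa using h
    · have h := (hiso 1 0 (by norm_num) (by norm_num)).mpr (by simp)
      simpa using h
  · rintro ⟨a, b, c, d, e, hsub, h1, h2, h3, h4⟩
    refine ⟨a, b, c, d, e, hsub, ?_⟩
    intro i j hi hj
    interval_cases i <;> interval_cases j <;> simp <;> omega
/-! ### pair extraction helpers and backward transfer -/

lemma tri_12 {x y z : ℕ} : [x, y].Sublist [x, y, z] := .cons₂ _ (.cons₂ _ (.cons _ .slnil))
lemma tri_13 {x y z : ℕ} : [x, z].Sublist [x, y, z] := .cons₂ _ (.cons _ (.cons₂ _ .slnil))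
lemma tri_23 {x y z : ℕ} : [y, z].Sublist [x, y, z] := .cons _ (.cons₂ _ (.cons₂ _ .slnil))
lemma quad_12 {x y z w : ℕ} : [x, y].Sublist [x, y, z, w] :=
  .cons₂ _ (.cons₂ _ (.cons _ (.cons _ .slnil)))
lemma quad_13 {x y z w : ℕ} : [x, z].Sublist [x, y, z, w] :=
  .cons₂ _ (.cons _ (.cons₂ _ (.cons _ .slnil)))
lemma quad_14 {x y z w : ℕ} : [x, w].Sublist [x, y, z, w] :=
  .cons₂ _ (.cons _ (.cons _ (.cons₂ _ .slnil)))
lemma quad_23 {x y z w : ℕ} : [y, z].Sublist [x, y, z, w] :=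
  .cons _ (.cons₂ _ (.cons₂ _ (.cons _ .slnil)))
lemma quad_24 {x y z w : ℕ} : [y, w].Sublist [x, y, z, w] :=
  .cons _ (.cons₂ _ (.cons _ (.cons₂ _ .slnil)))
lemma quad_34 {x y z w : ℕ} : [z, w].Sublist [x, y, z, w] :=
  .cons _ (.cons _ (.cons₂ _ (.cons₂ _ .slnil)))
lemma quint_13 {x y z w v : ℕ} : [x, z].Sublist [x, y, z, w, v] :=
  .cons₂ _ (.cons _ (.cons₂ _ (.cons _ (.cons _ .slnil))))
lemma quint_14 {x y z w v : ℕ} : [x, w].Sublist [x, y, z, w, v] :=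
  .cons₂ _ (.cons _ (.cons _ (.cons₂ _ (.cons _ .slnil))))
lemma quint_23 {x y z w v : ℕ} : [y, z].Sublist [x, y, z, w, v] :=
  .cons _ (.cons₂ _ (.cons₂ _ (.cons _ (.cons _ .slnil))))
lemma quint_24 {x y z w v : ℕ} : [y, w].Sublist [x, y, z, w, v] :=
  .cons _ (.cons₂ _ (.cons _ (.cons₂ _ (.cons _ .slnil))))
lemma quint_34 {x y z w v : ℕ} : [z, w].Sublist [x, y, z, w, v] :=
  .cons _ (.cons _ (.cons₂ _ (.cons₂ _ (.cons _ .slnil))))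
lemma quint_45 {x y z w v : ℕ} : [w, v].Sublist [x, y, z, w, v] :=
  .cons _ (.cons _ (.cons _ (.cons₂ _ (.cons₂ _ .slnil))))

lemma exists_max : ∀ {l : List ℕ}, l ≠ [] → ∃ m ∈ l, ∀ y ∈ l, y ≤ m := by
  intro l
  induction l with
  | nil => intro h; exact absurd rfl h
  | cons x xs ih =>
    intro _
    cases xs with
    | nil => exact ⟨x, List.mem_singleton.mpr rfl, by intro y hy; simp at hy; omega⟩
    | cons z zs =>
      obtain ⟨m, hm, hmax⟩ := ih (by simp)
      by_cases hxm : x ≤ m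
      · refine ⟨m, List.mem_cons_of_mem _ hm, ?_⟩
        intro y hy
        rcases List.mem_cons.mp hy with rfl | hy
        · exact hxm
        · exact hmax y hy
      · refine ⟨x, List.mem_cons_self, ?_⟩
        intro y hy
        rcases List.mem_cons.mp hy with rfl | hy
        · exact le_rfl
        · have := hmax y hy; omega

lemma mem_of_pair_left {l : List ℕ} {u v : ℕ} (h : [u, v].Sublist l) : u ∈ l :=
  List.singleton_sublist.mp ((List.cons_sublist_cons.mpr (List.nil_sublist _)).trans h)

lemma mem_of_pair_right {l : List ℕ} {u v : ℕ} (h : [u, v].Sublist l) : v ∈ l :=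
  List.singleton_sublist.mp (((List.nil_sublist _).cons₂ v |>.cons u).trans h)

/-- if `u` appears before `v` in `bubblesort π` and `v < u`, the same order held in `π`. -/
lemma back_big_first {π : List ℕ} (hn : π.Nodup) {u v : ℕ}
    (hB : [u, v].Sublist (bubblesort π)) (hvu : v < u) : [u, v].Sublist π := by
  have hnB : (bubblesort π).Nodup := bubblesort_nodup hn
  have hu : u ∈ π := (bubblesort_perm π).mem_iff.mp (mem_of_pair_left hB)
  have hv : v ∈ π := (bubblesort_perm π).mem_iff.mp (mem_of_pair_right hB)
  rcases sub2_total hu hv with rfl | h | h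
  · omega
  · exact h
  · exfalso
    exact sub2_asymm hnB hB (bub_keep hn h (Or.inl hvu))

lemma back_small_first {π : List ℕ} (hn : π.Nodup) {u v : ℕ}
    (hB : [u, v].Sublist (bubblesort π)) (huv : u < v)
    (hwit : ∃ w, v < w ∧ [w, u].Sublist π) : [u, v].Sublist π := by
  have hnB : (bubblesort π).Nodup := bubblesort_nodup hn
  have hu : u ∈ π := (bubblesort_perm π).mem_iff.mp (mem_of_pair_left hB)
  have hv : v ∈ π := (bubblesort_perm π).mem_iff.mp (mem_of_pair_right hB)
  rcases sub2_total hu hv with rfl | h | h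
  · omega
  · exact h
  · exfalso
    exact sub2_asymm hnB hB (bub_keep hn h (Or.inr hwit))

lemma beta1 {π : List ℕ} (hn : π.Nodup) {p q r : ℕ}
    (h : [p, q, r].Sublist (bubblesort π)) (hrp : r < p) (hpq : p < q) :
    Contains π [2, 3, 4, 1] ∨ Contains π [2, 4, 3, 1] ∨ Contains π [3, 2, 4, 1] ∨
      Contains π [4, 2, 3, 1] := by
  have hnB : (bubblesort π).Nodup := bubblesort_nodup hn
  have hBpq : [p, q].Sublist (bubblesort π) := tri_12.trans h
  have hBqr : [q, r].Sublist (bubblesort π) := tri_23.trans h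
  have hBpr : [p, r].Sublist (bubblesort π) := tri_13.trans h
  have hqr : [q, r].Sublist π := back_big_first hn hBqr (by omega)
  have hpr : [p, r].Sublist π := back_big_first hn hBpr hrp
  have hp : p ∈ π := mem_of_pair_left hpr
  have hq : q ∈ π := mem_of_pair_left hqr
  have hr : r ∈ π := mem_of_pair_right hqr
  -- split π at r
  obtain ⟨P, S, hP⟩ := List.append_of_mem hr
  have hqP : q ∈ P := sub2_left (hP ▸ hn) (hP ▸ hqr)
  have hpP : p ∈ P := sub2_left (hP ▸ hn) (hP ▸ hpr)
  obtain ⟨M, hMP, hMmax⟩ := exists_max (l := P) (by intro hh; rw [hh] at hqP; simp at hqP)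
  have hMr : [M, r].Sublist π := by
    rw [hP]; exact sub2_of_mem_mem hMP (List.mem_cons_self)
  have hMq : q ≤ M := hMmax q hqP
  have hMnq : M ≠ q := by
    intro hMq'
    -- q is the maximum before r : q passes r, contradiction
    have hflip : [r, q].Sublist (bubblesort π) := by
      refine bub_flip hn hqr (by omega) ?_
      intro w hwr hwq
      have hwP : w ∈ P := sub2_left (hP ▸ hn) (hP ▸ hwr)
      have := hMmax w hwP
      omega
    exact sub2_asymm hnB hBqr hflip
  have hMgt : q < M := by omega
  have hMπ : M ∈ π := by rw [hP]; exact List.mem_append.mpr (Or.inl hMP)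
  rcases sub2_total hp hq with rfl | hpqπ | hqpπ
  · omega
  · -- p before q in π
    rcases sub2_total hMπ hq with h1 | h1 | h1
    · omega
    · -- M before q
      rcases sub2_total hMπ hp with h2 | h2 | h2
      · omega
      · -- M before p : 4231 via (M, p, q, r)
        refine Or.inr (Or.inr (Or.inr ?_))
        rw [contains_4231]
        exact ⟨M, p, q, r, assemble4 hn h2 hpqπ hqr, hrp, hpq, hMgt⟩
      · -- p before M before q : 2431 via (p, M, q, r)
        refine Or.inr (Or.inl ?_)
        rw [contains_2431]
        exact ⟨p, M, q, r, assemble4 hn h2 h1 hqr, hrp, hpq, hMgt⟩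
    · -- q before M : 2341 via (p, q, M, r)
      refine Or.inl ?_
      rw [contains_2341]
      exact ⟨p, q, M, r, assemble4 hn hpqπ h1 hMr, hrp, hpq, hMgt⟩
  · -- q before p in π
    rcases sub2_total hMπ hp with h2 | h2 | h2
    · omega
    · -- M before p : then q stays before p in bubblesort, contradiction
      exfalso
      have : [q, p].Sublist (bubblesort π) := bub_keep hn hqpπ (Or.inr ⟨M, hMgt, h2⟩)
      exact sub2_asymm hnB hBpq this
    · -- p before M : 3241 via (q, p, M, r)
      refine Or.inr (Or.inr (Or.inl ?_))
      rw [contains_3241]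
      exact ⟨q, p, M, r, assemble4 hn hqpπ h2 hMr, hrp, hpq, hMgt⟩

lemma beta2 {π : List ℕ} (hn : π.Nodup) {D b a c : ℕ}
    (h : [D, b, a, c].Sublist (bubblesort π)) (hab : a < b) (hbc : b < c) (hcD : c < D) :
    Contains π [4, 5, 2, 1, 3] ∨ Contains π [5, 4, 2, 1, 3] := by
  have hnB : (bubblesort π).Nodup := bubblesort_nodup hn
  have hBDb : [D, b].Sublist (bubblesort π) := quad_12.trans h
  have hBba : [b, a].Sublist (bubblesort π) := quad_23.trans h
  have hBac : [a, c].Sublist (bubblesort π) := quad_34.trans h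
  have hBDa : [D, a].Sublist (bubblesort π) := quad_13.trans h
  have hBDc : [D, c].Sublist (bubblesort π) := quad_14.trans h
  have hBbc : [b, c].Sublist (bubblesort π) := quad_24.trans h
  have hDb : [D, b].Sublist π := back_big_first hn hBDb (by omega)
  have hba : [b, a].Sublist π := back_big_first hn hBba hab
  have hDa : [D, a].Sublist π := back_big_first hn hBDa (by omega)
  have hDc : [D, c].Sublist π := back_big_first hn hBDc hcD
  have hac : [a, c].Sublist π := back_small_first hn hBac (by omega) ⟨D, hcD, hDa⟩
  -- split π at b
  have hb : b ∈ π := mem_of_pair_right hDb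
  obtain ⟨P, S, hP⟩ := List.append_of_mem hb
  have hDP : D ∈ P := sub2_left (hP ▸ hn) (hP ▸ hDb)
  -- extract an element above D before b
  have hE : ∃ E ∈ P, E ≠ D ∧ D < E := by
    by_contra hcon
    push_neg at hcon
    have hflip : [b, D].Sublist (bubblesort π) := by
      refine bub_flip hn hDb (by omega) ?_
      intro w hwb hwD
      have hwP : w ∈ P := sub2_left (hP ▸ hn) (hP ▸ hwb)
      have := hcon w hwP hwD
      omega
    exact sub2_asymm hnB hBDb hflip
  obtain ⟨E, hEP, hED, hDE⟩ := hE
  have hEb : [E, b].Sublist π := by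
    rw [hP]; exact sub2_of_mem_mem hEP (List.mem_cons_self)
  have hEπ : E ∈ π := by rw [hP]; exact List.mem_append.mpr (Or.inl hEP)
  have hDπ : D ∈ π := mem_of_pair_left hDb
  rcases sub2_total hEπ hDπ with h1 | h1 | h1
  · exact absurd h1 hED
  · -- E before D : 54213 via (E, D, b, a, c)
    refine Or.inr ?_
    rw [contains_54213]
    exact ⟨E, D, b, a, c, assemble5 hn h1 hDb hba hac, hab, hbc, hcD, hDE⟩
  · -- D before E : 45213 via (D, E, b, a, c)
    refine Or.inl ?_
    rw [contains_45213]
    exact ⟨D, E, b, a, c, assemble5 hn h1 hEb hba hac, hab, hbc, hcD, hDE⟩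
/-! ### forward transfer: patterns in π give patterns in bubblesort π -/

lemma beta3_2341 {π : List ℕ} (hn : π.Nodup) {a b c d : ℕ}
    (h : [a, b, c, d].Sublist π) (h1 : d < a) (h2 : a < b) (h3 : b < c) :
    ∃ u v w, [u, v, w].Sublist (bubblesort π) ∧ w < u ∧ u < v := by
  have hab : [a, b].Sublist (bubblesort π) := bub_keep hn (quad_12.trans h) (Or.inl h2)
  have hbd : [b, d].Sublist (bubblesort π) :=
    bub_keep hn (quad_24.trans h) (Or.inr ⟨c, h3, quad_34.trans h⟩)
  exact ⟨a, b, d, assemble3 (bubblesort_nodup hn) hab hbd, h1, h2⟩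

lemma beta3_2431 {π : List ℕ} (hn : π.Nodup) {a b c d : ℕ}
    (h : [a, b, c, d].Sublist π) (h1 : d < a) (h2 : a < c) (h3 : c < b) :
    ∃ u v w, [u, v, w].Sublist (bubblesort π) ∧ w < u ∧ u < v := by
  have hac : [a, c].Sublist (bubblesort π) := bub_keep hn (quad_13.trans h) (Or.inl h2)
  have hcd : [c, d].Sublist (bubblesort π) :=
    bub_keep hn (quad_34.trans h) (Or.inr ⟨b, h3, quad_24.trans h⟩)
  exact ⟨a, c, d, assemble3 (bubblesort_nodup hn) hac hcd, h1, h2⟩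

lemma beta3_4231 {π : List ℕ} (hn : π.Nodup) {a b c d : ℕ}
    (h : [a, b, c, d].Sublist π) (h1 : d < b) (h2 : b < c) (h3 : c < a) :
    ∃ u v w, [u, v, w].Sublist (bubblesort π) ∧ w < u ∧ u < v := by
  have hbc : [b, c].Sublist (bubblesort π) := bub_keep hn (quad_23.trans h) (Or.inl h2)
  have hcd : [c, d].Sublist (bubblesort π) :=
    bub_keep hn (quad_34.trans h) (Or.inr ⟨a, h3, quad_14.trans h⟩)
  exact ⟨b, c, d, assemble3 (bubblesort_nodup hn) hbc hcd, h1, h2⟩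

lemma beta3_3241 {π : List ℕ} (hn : π.Nodup) {a b c d : ℕ}
    (h : [a, b, c, d].Sublist π) (h1 : d < b) (h2 : b < a) (h3 : a < c) :
    ∃ u v w, [u, v, w].Sublist (bubblesort π) ∧ w < u ∧ u < v := by
  have hnB := bubblesort_nodup hn
  obtain ⟨A1, R1, rfl, hr1⟩ := cons_sublist_split h
  obtain ⟨A2, R2, hR1, hr2⟩ := cons_sublist_split hr1
  obtain ⟨A3, R3, hR2, hr3⟩ := cons_sublist_split hr2
  obtain ⟨A4, R4, hR3, _⟩ := cons_sublist_split hr3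
  subst hR1; subst hR2; subst hR3
  set π := A1 ++ a :: (A2 ++ b :: (A3 ++ c :: (A4 ++ d :: R4))) with hπ
  have hquad : [a, b, c, d].Sublist π := h
  set P : List ℕ := A1 ++ a :: (A2 ++ b :: (A3 ++ c :: A4)) with hPdef
  have hπP : π = P ++ d :: R4 := by simp [hπ, hPdef]
  have hcP : c ∈ P := by
    rw [hPdef]
    refine List.mem_append.mpr (Or.inr (List.mem_cons_of_mem _ ?_))
    refine List.mem_append.mpr (Or.inr (List.mem_cons_of_mem _ ?_))
    exact List.mem_append.mpr (Or.inr (List.mem_cons_self))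
  obtain ⟨M, hMP, hMmax⟩ := exists_max (l := P)
    (by intro hh; rw [hh] at hcP; simp at hcP)
  have hMc : c ≤ M := hMmax c hcP
  have hMd : [M, d].Sublist π := by
    rw [hπP]; exact sub2_of_mem_mem hMP (List.mem_cons_self)
  by_cases hMc' : M = c
  · -- c is the maximum of the prefix before d
    set P2 : List ℕ := A1 ++ a :: A2 with hP2def
    set R2' : List ℕ := A3 ++ c :: (A4 ++ d :: R4) with hR2'def
    have hπP2 : π = P2 ++ b :: R2' := by simp [hπ, hP2def, hR2'def]
    have haP2 : a ∈ P2 := by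
      rw [hP2def]
      exact List.mem_append.mpr (Or.inr (List.mem_cons_self))
    obtain ⟨m, hmP2, hmmax⟩ := exists_max (l := P2)
      (by intro hh; rw [hh] at haP2; simp at haP2)
    have hma : a ≤ m := hmmax a haP2
    have hmb : [m, b].Sublist π := by
      rw [hπP2]; exact sub2_of_mem_mem hmP2 (List.mem_cons_self)
    have hmP : m ∈ P := by
      rw [hPdef]
      rcases List.mem_append.mp hmP2 with hh | hh
      · exact List.mem_append.mpr (Or.inl hh)
      · rcases List.mem_cons.mp hh with rfl | hh
        · exact List.mem_append.mpr (Or.inr (List.mem_cons_self))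
        · refine List.mem_append.mpr (Or.inr (List.mem_cons_of_mem _ ?_))
          exact List.mem_append.mpr (Or.inl hh)
    have hmM : m ≤ M := hMmax m hmP
    have hmc : m ≠ c := by
      rintro rfl
      have hcb : [m, b].Sublist π := hmb
      have hbc2 : [b, m].Sublist π := quad_23.trans hquad
      exact sub2_asymm (hπ ▸ hn) hbc2 hcb
    have hmltc : m < c := by omega
    have hflip : [b, m].Sublist (bubblesort π) := by
      refine bub_flip hn hmb (by omega) ?_
      intro w hwb hwm
      have hwP2 : w ∈ P2 := sub2_left (hπP2 ▸ hn) (hπP2 ▸ hwb)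
      have := hmmax w hwP2
      omega
    have hmd2 : [m, d].Sublist π := by
      rw [hπP2]
      refine sub2_of_mem_mem hmP2 (List.mem_cons_of_mem _ ?_)
      rw [hR2'def]
      refine List.mem_append.mpr (Or.inr (List.mem_cons_of_mem _ ?_))
      exact List.mem_append.mpr (Or.inr (List.mem_cons_self))
    have hmdB : [m, d].Sublist (bubblesort π) :=
      bub_keep hn hmd2 (Or.inr ⟨c, hmltc, quad_34.trans hquad⟩)
    exact ⟨b, m, d, assemble3 hnB hflip hmdB, h1, by omega⟩
  · -- some element above c sits before d
    have hMgt : c < M := by omega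
    have hbcB : [b, c].Sublist (bubblesort π) :=
      bub_keep hn (quad_23.trans hquad) (Or.inl (by omega))
    have hcdB : [c, d].Sublist (bubblesort π) :=
      bub_keep hn (quad_34.trans hquad) (Or.inr ⟨M, hMgt, hMd⟩)
    exact ⟨b, c, d, assemble3 hnB hbcB hcdB, h1, by omega⟩

lemma beta3_45213 {π : List ℕ} (hn : π.Nodup) {a b c d e : ℕ}
    (h : [a, b, c, d, e].Sublist π) (h1 : d < c) (h2 : c < e) (h3 : e < a) (h4 : a < b) :
    ∃ D B A C, [D, B, A, C].Sublist (bubblesort π) ∧ A < B ∧ B < C ∧ C < D := by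
  have hac : [a, c].Sublist (bubblesort π) :=
    bub_keep hn (quint_13.trans h) (Or.inr ⟨b, h4, quint_23.trans h⟩)
  have hcd : [c, d].Sublist (bubblesort π) :=
    bub_keep hn (quint_34.trans h) (Or.inr ⟨b, by omega, quint_24.trans h⟩)
  have hde : [d, e].Sublist (bubblesort π) :=
    bub_keep hn (quint_45.trans h) (Or.inl (by omega))
  exact ⟨a, c, d, e, assemble4 (bubblesort_nodup hn) hac hcd hde, h1, h2, h3⟩

lemma beta3_54213 {π : List ℕ} (hn : π.Nodup) {a b c d e : ℕ}
    (h : [a, b, c, d, e].Sublist π) (h1 : d < c) (h2 : c < e) (h3 : e < b) (h4 : b < a) :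
    ∃ D B A C, [D, B, A, C].Sublist (bubblesort π) ∧ A < B ∧ B < C ∧ C < D := by
  have hbc : [b, c].Sublist (bubblesort π) :=
    bub_keep hn (quint_23.trans h) (Or.inr ⟨a, h4, quint_13.trans h⟩)
  have hcd : [c, d].Sublist (bubblesort π) :=
    bub_keep hn (quint_34.trans h) (Or.inr ⟨a, by omega, quint_14.trans h⟩)
  have hde : [d, e].Sublist (bubblesort π) :=
    bub_keep hn (quint_45.trans h) (Or.inl (by omega))
  exact ⟨b, c, d, e, assemble4 (bubblesort_nodup hn) hbc hcd hde, h1, h2, h3⟩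

end Machinery
theorem psb_bubblesort_sorts_iff (n : ℕ) (π : List ℕ) (hπ : IsPermList n π) :
    psb (bubblesort π) = List.range' 1 n ↔
      Avoids π [2, 3, 4, 1] ∧ Avoids π [2, 4, 3, 1] ∧ Avoids π [3, 2, 4, 1] ∧
      Avoids π [4, 2, 3, 1] ∧ Avoids π [4, 5, 2, 1, 3] ∧ Avoids π [5, 4, 2, 1, 3] := by
  have hperm : π.Perm (List.range' 1 n) := hπ
  have hn : π.Nodup := hperm.nodup_iff.mpr (List.nodup_range' (s := 1) (n := n))
  constructor
  · intro hsort
    have hcontra231 : ¬ ∃ u v w, [u, v, w].Sublist (bubblesort π) ∧ w < u ∧ u < v := by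
      rintro ⟨u, v, w, hsub, hwu, huv⟩
      obtain ⟨p, q, hqp, hpq⟩ := psb_unsorted_of_231 hsub hwu huv
      rw [hsort] at hpq
      have := sublist_pair_lt hpq
      omega
    have hcontra4213 : ¬ ∃ D B A C, [D, B, A, C].Sublist (bubblesort π) ∧
        A < B ∧ B < C ∧ C < D := by
      rintro ⟨D, B, A, C, hsub, h1, h2, h3⟩
      obtain ⟨p, q, hqp, hpq⟩ := psb_unsorted_of_4213 hsub h1 h2 h3
      rw [hsort] at hpq
      have := sublist_pair_lt hpq
      omega
    refine ⟨?_, ?_, ?_, ?_, ?_, ?_⟩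
    · intro hc
      obtain ⟨a, b, c, d, hsub, h1, h2, h3⟩ := contains_2341.mp hc
      exact hcontra231 (beta3_2341 hn hsub h1 h2 h3)
    · intro hc
      obtain ⟨a, b, c, d, hsub, h1, h2, h3⟩ := contains_2431.mp hc
      exact hcontra231 (beta3_2431 hn hsub h1 h2 h3)
    · intro hc
      obtain ⟨a, b, c, d, hsub, h1, h2, h3⟩ := contains_3241.mp hc
      exact hcontra231 (beta3_3241 hn hsub h1 h2 h3)
    · intro hc
      obtain ⟨a, b, c, d, hsub, h1, h2, h3⟩ := contains_4231.mp hc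
      exact hcontra231 (beta3_4231 hn hsub h1 h2 h3)
    · intro hc
      obtain ⟨a, b, c, d, e, hsub, h1, h2, h3, h4⟩ := contains_45213.mp hc
      exact hcontra4213 (beta3_45213 hn hsub h1 h2 h3 h4)
    · intro hc
      obtain ⟨a, b, c, d, e, hsub, h1, h2, h3, h4⟩ := contains_54213.mp hc
      exact hcontra4213 (beta3_54213 hn hsub h1 h2 h3 h4)
  · rintro ⟨h1, h2, h3, h4, h5, h6⟩
    refine psb_sorts ((bubblesort_perm π).trans hperm) ?_ ?_
    · rintro ⟨u, v, w, hsub, hwu, huv⟩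
      rcases beta1 hn hsub hwu huv with hc | hc | hc | hc
      · exact h1 hc
      · exact h2 hc
      · exact h3 hc
      · exact h4 hc
    · rintro ⟨D, b, a, c, hsub, hab, hbc, hcD⟩
      rcases beta2 hn hsub hab hbc hcD with hc | hc
      · exact h5 hc
      · exact h6 hc
end

section
/- The generating function (1-x)(1-2x)(1-4x) / (1 - 8x + 20x^2 - 18x^3 + 3x^4) has power series coefficients beginning 1, 1, 2, 6, 23, 97, 418, 1800, 7717, 32969, 140558; equivalently, the coefficient sequence a(n) satisfies a(n) = 8a(n-1) - 20a(n-2) + 18a(n-3) - 3a(n-4) for n ≥ 5 with initial values a(0)=1, a(1)=1, a(2)=2, a(3)=6, a(4)=23. -/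
open PowerSeries

theorem genfun_coeffs (f : PowerSeries ℚ)
    (hf : f * (1 - 8 * X + 20 * X ^ 2 - 18 * X ^ 3 + 3 * X ^ 4) =
      (1 - X) * (1 - 2 * X) * (1 - 4 * X)) :
    coeff 0 f = 1 ∧ coeff 1 f = 1 ∧ coeff 2 f = 2 ∧ coeff 3 f = 6 ∧
    coeff 4 f = 23 ∧ coeff 5 f = 97 ∧ coeff 6 f = 418 ∧ coeff 7 f = 1800 ∧
    coeff 8 f = 7717 ∧ coeff 9 f = 32969 ∧ coeff 10 f = 140558 ∧
    ∀ m : ℕ, 5 ≤ m →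
      coeff m f = 8 * coeff (m - 1) f - 20 * coeff (m - 2) f +
        18 * coeff (m - 3) f - 3 * coeff (m - 4) f := by
  have h2 : f - C 8 * (f * X ^ 1) + C 20 * (f * X ^ 2) - C 18 * (f * X ^ 3)
        + C 3 * (f * X ^ 4)
      = 1 - C 7 * X ^ 1 + C 14 * X ^ 2 - C 8 * X ^ 3 := by
    rw [show (1 : ℚ⟦X⟧) - C 7 * X ^ 1 + C 14 * X ^ 2 - C 8 * X ^ 3
        = (1 - X) * (1 - 2 * X) * (1 - 4 * X) by simp only [map_ofNat]; ring, ← hf]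
    simp only [map_ofNat]
    ring
  have h3 : ∀ n : ℕ,
      ((coeff n f - 8 * if 1 ≤ n then coeff (n - 1) f else 0)
        + 20 * if 2 ≤ n then coeff (n - 2) f else 0)
        - (18 * if 3 ≤ n then coeff (n - 3) f else 0)
        + 3 * (if 4 ≤ n then coeff (n - 4) f else 0)
      = ((if n = 0 then (1:ℚ) else 0)
          - (if 1 ≤ n then (if n - 1 = 0 then (7:ℚ) else 0) else 0))
        + (if 2 ≤ n then (if n - 2 = 0 then (14:ℚ) else 0) else 0)
        - (if 3 ≤ n then (if n - 3 = 0 then (8:ℚ) else 0) else 0) := by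
    intro n
    have h4 := congrArg (coeff n) h2
    simp only [map_sub, map_add, coeff_C_mul, coeff_mul_X_pow', coeff_one,
      coeff_X_pow, coeff_C, mul_ite, mul_one, mul_zero] at h4 ⊢
    exact h4
  have e0 := h3 0
  have e1 := h3 1
  have e2 := h3 2
  have e3 := h3 3
  have e4 := h3 4
  have e5 := h3 5
  have e6 := h3 6
  have e7 := h3 7
  have e8 := h3 8
  have e9 := h3 9
  have e10 := h3 10
  norm_num at e0 e1 e2 e3 e4 e5 e6 e7 e8 e9 e10
  have c0' : constantCoeff f = 1 := by linarith
  have c0 : coeff 0 f = 1 := by rw [coeff_zero_eq_constantCoeff]; exact c0'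
  have c1 : coeff 1 f = 1 := by linarith
  have c2 : coeff 2 f = 2 := by linarith
  have c3 : coeff 3 f = 6 := by linarith
  have c4 : coeff 4 f = 23 := by linarith
  have c5 : coeff 5 f = 97 := by linarith
  have c6 : coeff 6 f = 418 := by linarith
  have c7 : coeff 7 f = 1800 := by linarith
  have c8 : coeff 8 f = 7717 := by linarith
  have c9 : coeff 9 f = 32969 := by linarith
  have c10 : coeff 10 f = 140558 := by linarith
  refine ⟨c0, c1, c2, c3, c4, c5, c6, c7, c8, c9, c10, ?_⟩
  intro m hm
  have em := h3 m
  simp only [show ¬(m = 0) by omega, show ¬(m = 1) by omega, show ¬(m = 2) by omega,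
    show ¬(m = 3) by omega, show 1 ≤ m by omega, show 2 ≤ m by omega,
    show 3 ≤ m by omega, show 4 ≤ m by omega, show ¬(m-1=0) by omega, show ¬(m-2=0) by omega, show ¬(m-3=0) by omega, if_true, if_false, ite_true, ite_false,
    if_neg, if_pos] at em
  linarith
end
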